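/- (Bou-Rabee–McReynolds) The divisibility function of the free group is not dominated by log: for every constant C > 0 there exist an integer n and a nontrivial word w ∈ F_k with word length |w| ≤ n such that every subgroup H ≤ F_k of index at most C·log(C·n) contains w. (That is, max_{|w| ≤ n} D_{F_k}(w) ⋠ log n.) -/

import Mathlib

/-!
Fix two generators `a ≠ b`. The word `treeWord a b D 1` is a balanced tree of nested commutators
whose `2 ^ D` leaves are `⁅a ^ e, b⁆` for `1 ≤ e ≤ 2 ^ D`. Conjugating the inner commutators by
`a` and by `b` prevents any cancellation, so its reduced word starts with `a` and ends with `b⁻¹`;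
in particular it is nontrivial, and its length is at most `2 ^ (3D + 4)`. A commutator is killed as
soon as one of its entries is, so the word is killed by every homomorphism sending `a` to an
element of order at most `2 ^ D`.

If `[F : H] ≤ m`, then `a` acts on `F ⧸ H` by a permutation of at most `m` points, whose order is
the lcm of at most `√(2m)` distinct cycle lengths, each at most `m`; so the order is at most
`m ^ √(2m)`. With `m = t ^ 4` and `D = 8 t ^ 3` this is at most `2 ^ D`, hence the word lies in the
normal core of every subgroup of index at most `t ^ 4`, while its length `n` satisfies
`C log (C n) = O(t ^ 3) ≤ t ^ 4` once `t` is large.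
-/

open scoped commutatorElement

namespace FreeGroup

variable {α : Type*}

section TreeWord

variable (a b : α)

def treeWord : ℕ → ℕ → FreeGroup α
  | 0, lo => ⁅of a ^ lo, of b⁆
  | d + 1, lo => ⁅of a * treeWord d lo * (of a)⁻¹, of b * treeWord d (lo + 2 ^ d) * (of b)⁻¹⁆

variable {a b}

theorem map_treeWord_eq_one {G : Type*} [Group G] (f : FreeGroup α →* G) {e : ℕ}
    (he : f (of a) ^ e = 1) :
    ∀ (d : ℕ) {lo : ℕ}, lo ≤ e → e < lo + 2 ^ d → f (treeWord a b d lo) = 1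
  | 0, lo, h₁, h₂ => by
    obtain rfl : lo = e := by omega
    simp [treeWord, map_commutatorElement, he]
  | d + 1, lo, h₁, h₂ => by
    rcases lt_or_ge e (lo + 2 ^ d) with h | h
    · simp [treeWord, map_commutatorElement, map_treeWord_eq_one f he d h₁ h]
    · have h' : e < lo + 2 ^ d + 2 ^ d := by rw [pow_succ] at h₂; omega
      simp [treeWord, map_commutatorElement, map_treeWord_eq_one f he d h h']

end TreeWord

variable [DecidableEq α]

section HasEnds

def HasEnds (p q : α × Bool) (x : FreeGroup α) : Prop :=
  x.toWord.head? = some p ∧ x.toWord.getLast? = some q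

variable {p q r s : α × Bool} {x y : FreeGroup α}

theorem toWord_mul_of_isReduced (h : IsReduced (x.toWord ++ y.toWord)) :
    (x * y).toWord = x.toWord ++ y.toWord := by
  rw [toWord_mul, h.reduce_eq]

theorem HasEnds.ne_one (hx : HasEnds p q x) : x ≠ 1 := by
  rintro rfl
  simp [HasEnds] at hx

theorem HasEnds.mul (hx : HasEnds p q x) (hy : HasEnds r s y) (hqr : q.1 = r.1 → q.2 = r.2) :
    HasEnds p s (x * y) := by
  have hred : IsReduced (x.toWord ++ y.toWord) :=
    List.isChain_append.2 ⟨isReduced_toWord, isReduced_toWord, by simpa [hx.2, hy.1]⟩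
  rw [HasEnds, toWord_mul_of_isReduced hred]
  exact ⟨by simp [List.head?_append, hx.1], by simp [List.getLast?_append, hy.2]⟩

theorem HasEnds.inv (hx : HasEnds p q x) : HasEnds (q.1, !q.2) (p.1, !p.2) x⁻¹ := by
  simp [HasEnds, toWord_inv, invRev, hx.1, hx.2]

theorem hasEnds_of (a : α) : HasEnds (a, true) (a, true) (of a) := by
  simp [HasEnds, toWord_of]

theorem hasEnds_of_pow (a : α) {e : ℕ} (he : e ≠ 0) : HasEnds (a, true) (a, true) (of a ^ e) := by
  simp [HasEnds, toWord_of_pow, List.head?_replicate, List.getLast?_replicate, he]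

theorem HasEnds.conj {a b : α} (hx : HasEnds (a, true) (b, false) x) (c : α) :
    HasEnds (c, true) (c, false) (of c * x * (of c)⁻¹) :=
  ((hasEnds_of c).mul hx (by simp)).mul (hasEnds_of c).inv (by simp)

theorem HasEnds.commutatorElement {a b : α} {s t u v : Bool} (hx : HasEnds (a, s) (a, t) x)
    (hy : HasEnds (b, u) (b, v) y) (hab : a ≠ b) : HasEnds (a, s) (b, !u) ⁅x, y⁆ := by
  rw [commutatorElement_def]
  exact ((hx.mul hy (by simp [hab])).mul hx.inv (by simp [hab.symm])).mul hy.inv (by simp [hab])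

end HasEnds

theorem norm_of_mul_mul_of_inv_le (c : α) (x : FreeGroup α) :
    norm (of c * x * (of c)⁻¹) ≤ norm x + 2 := by
  have := norm_mul_le (of c * x) (of c)⁻¹
  have := norm_mul_le (of c) x
  simp only [norm_inv_eq, norm_of] at *
  omega

theorem norm_commutatorElement_le (x y : FreeGroup α) :
    norm ⁅x, y⁆ ≤ 2 * norm x + 2 * norm y := by
  rw [commutatorElement_def]
  have := norm_mul_le (x * y * x⁻¹) y⁻¹
  have := norm_mul_le (x * y) x⁻¹
  have := norm_mul_le x y
  simp only [norm_inv_eq] at *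
  omega

variable {a b : α}

theorem hasEnds_treeWord (hab : a ≠ b) :
    ∀ (d : ℕ) {lo : ℕ}, lo ≠ 0 → HasEnds (a, true) (b, false) (treeWord a b d lo)
  | 0, _, hlo => (hasEnds_of_pow a hlo).commutatorElement (hasEnds_of b) hab
  | d + 1, _, hlo =>
    ((hasEnds_treeWord hab d hlo).conj a).commutatorElement
      ((hasEnds_treeWord hab d (by positivity)).conj b) hab

theorem treeWord_ne_one (hab : a ≠ b) (d : ℕ) {lo : ℕ} (hlo : lo ≠ 0) :
    treeWord a b d lo ≠ 1 :=
  (hasEnds_treeWord hab d hlo).ne_one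

theorem norm_treeWord_add_le :
    ∀ (d : ℕ) {lo B : ℕ}, lo + 2 ^ d ≤ B → norm (treeWord a b d lo) + 8 ≤ 4 ^ d * (2 * B + 8)
  | 0, lo, B, h => by
    have := norm_commutatorElement_le (of a ^ lo) (of b)
    simp only [treeWord, norm_of_pow, norm_of, pow_zero] at *
    omega
  | d + 1, lo, B, h => by
    rw [pow_succ] at h
    have := norm_treeWord_add_le d (lo := lo) (B := B) (by omega)
    have := norm_treeWord_add_le d (lo := lo + 2 ^ d) (B := B) (by omega)
    have := norm_commutatorElement_le (of a * treeWord a b d lo * (of a)⁻¹)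
      (of b * treeWord a b d (lo + 2 ^ d) * (of b)⁻¹)
    have := norm_of_mul_mul_of_inv_le a (treeWord a b d lo)
    have := norm_of_mul_mul_of_inv_le b (treeWord a b d (lo + 2 ^ d))
    rw [treeWord, pow_succ']
    linarith

theorem norm_treeWord_one_le (d : ℕ) : norm (treeWord a b d 1) ≤ 2 ^ (3 * d + 4) := by
  have h2d := Nat.one_le_two_pow (n := d)
  have := norm_treeWord_add_le (a := a) (b := b) d (lo := 1) (B := 2 ^ (d + 1))
    (by rw [pow_succ]; omega)
  calc norm (treeWord a b d 1) ≤ 4 ^ d * (2 * 2 ^ (d + 1) + 8) := by omega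
    _ ≤ 4 ^ d * (16 * 2 ^ d) := by gcongr; rw [pow_succ]; omega
    _ = 2 ^ (3 * d + 4) := by rw [show (4 : ℕ) = 2 ^ 2 by rfl, ← pow_mul]; ring

end FreeGroup

open Finset in
theorem Finset.card_sq_le_two_mul_sum (S : Finset ℕ) (hS : ∀ x ∈ S, 0 < x) :
    #S ^ 2 ≤ 2 * ∑ x ∈ S, x := by
  induction S using Finset.induction_on_max with
  | empty => simp
  | insert M S hlt ih =>
    have hM : M ∉ S := fun h => lt_irrefl M (hlt M h)
    have hcard : #S + 1 ≤ M := by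
      have := card_le_card fun x hx => mem_Ico.2 ⟨hS x (mem_insert_of_mem hx), hlt x hx⟩
      rw [Nat.card_Ico] at this
      have := hS M (mem_insert_self M S)
      omega
    have := ih fun x hx => hS x (mem_insert_of_mem hx)
    rw [card_insert_of_notMem hM, sum_insert hM]
    nlinarith

theorem Equiv.Perm.orderOf_le_pow {β : Type*} [Fintype β] [DecidableEq β] (σ : Equiv.Perm β)
    {m s : ℕ} (hm₀ : 0 < m) (hm : Fintype.card β ≤ m) (hs : 2 * m ≤ s ^ 2) :
    orderOf σ ≤ m ^ s := by
  set S := σ.cycleType.toFinset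
  have hS : ∀ x ∈ S, 2 ≤ x := fun x hx => two_le_of_mem_cycleType (Multiset.mem_toFinset.1 hx)
  have hsum : ∑ x ∈ S, x ≤ m :=
    calc ∑ x ∈ S, x ≤ ∑ x ∈ S, σ.cycleType.count x • x := Finset.sum_le_sum fun x hx =>
          Nat.le_mul_of_pos_left x (Multiset.count_pos.2 (Multiset.mem_toFinset.1 hx))
      _ = σ.cycleType.sum := (Finset.sum_multiset_count _).symm
      _ ≤ m := (sum_cycleType_le σ).trans hm
  have hcard : S.card ≤ s := by
    have := S.card_sq_le_two_mul_sum fun x hx => (hS x hx).trans_lt' two_pos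
    nlinarith
  calc orderOf σ = S.lcm id := by
        rw [← lcm_cycleType, Finset.lcm_def, Multiset.map_id, Multiset.toFinset_val,
          Multiset.lcm_dedup]
    _ ≤ ∏ x ∈ S, x := Nat.le_of_dvd (Finset.prod_pos fun x hx => by linarith [hS x hx])
        (Finset.lcm_dvd_prod S id)
    _ ≤ m ^ S.card := Finset.prod_le_pow_card S id m fun x hx =>
        (Finset.single_le_sum (f := id) (fun _ _ => Nat.zero_le _) hx).trans hsum
    _ ≤ m ^ s := Nat.pow_le_pow_right hm₀ hcard

namespace FreeGroup

theorem treeWord_mem_of_index_le {α : Type*} (a b : α) {H : Subgroup (FreeGroup α)} {m s D : ℕ}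
    (hH : H.index ≠ 0) (hm : H.index ≤ m) (hs : 2 * m ≤ s ^ 2) (hD : m ^ s ≤ 2 ^ D) :
    treeWord a b D 1 ∈ H := by
  classical
  have : H.FiniteIndex := ⟨hH⟩
  let _ : Fintype (FreeGroup α ⧸ H) := Fintype.ofFinite _
  let φ := MulAction.toPermHom (FreeGroup α) (FreeGroup α ⧸ H)
  have hcard : Fintype.card (FreeGroup α ⧸ H) ≤ m := by
    rwa [← Nat.card_eq_fintype_card, ← H.index_eq_card]
  have hord : orderOf (φ (of a)) ≤ 2 ^ D :=
    ((φ (of a)).orderOf_le_pow (by omega) hcard hs).trans hD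
  have hφ : φ (treeWord a b D 1) = 1 :=
    map_treeWord_eq_one φ (pow_orderOf_eq_one _) D (orderOf_pos _) (by omega)
  exact H.normalCore_le (by rwa [Subgroup.normalCore_eq_ker])

end FreeGroup

theorem exists_mul_log_le_pow_four (C : ℝ) (hC : 0 < C) :
    ∃ t : ℕ, C * Real.log (C * 2 ^ (24 * t ^ 3 + 4)) ≤ t ^ 4 := by
  obtain ⟨t, ht⟩ := exists_nat_ge (C * |Real.log C| + 28 * C + 1)
  refine ⟨t, ?_⟩
  have hClog : 0 ≤ C * |Real.log C| := mul_nonneg hC.le (abs_nonneg _)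
  have ht3 : (1 : ℝ) ≤ t ^ 3 := one_le_pow₀ (by linarith)
  have hlog : Real.log (C * 2 ^ (24 * t ^ 3 + 4)) ≤ |Real.log C| + (24 * t ^ 3 + 4) := by
    rw [Real.log_mul hC.ne' (by positivity), Real.log_pow]
    have hlog2 : Real.log 2 ≤ 1 := by linarith [Real.log_two_lt_d9]
    push_cast
    gcongr
    · exact le_abs_self _
    · exact mul_le_of_le_one_right (by positivity) hlog2
  calc C * Real.log (C * 2 ^ (24 * t ^ 3 + 4)) ≤ C * (|Real.log C| + (24 * t ^ 3 + 4)) := by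
        gcongr
    _ ≤ t * t ^ 3 := by
        nlinarith [mul_le_mul_of_nonneg_right ht (by linarith : (0 : ℝ) ≤ t ^ 3),
          mul_le_mul_of_nonneg_left ht3 hClog]
    _ = t ^ 4 := by ring

open FreeGroup in
/-- (Bou-Rabee–McReynolds) The divisibility function of the free group `F_k` (`k ≥ 2`)
is not dominated by `log`: for every `C > 0` there are `n` and a nontrivial word `w`
of length at most `n` such that every subgroup of (finite) index at most `C·log(C·n)`
contains `w`. -/
theorem stmt_15 (k : ℕ) (hk : 2 ≤ k) :
    ∀ C : ℝ, 0 < C →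
      ∃ (n : ℕ) (w : FreeGroup (Fin k)), w ≠ 1 ∧
        (FreeGroup.toWord w).length ≤ n ∧
        ∀ H : Subgroup (FreeGroup (Fin k)),
          H.index ≠ 0 → (H.index : ℝ) ≤ C * Real.log (C * n) → w ∈ H := by
  intro C hC
  obtain ⟨t, ht⟩ := exists_mul_log_le_pow_four C hC
  let a : Fin k := ⟨0, by omega⟩
  let b : Fin k := ⟨1, by omega⟩
  have hexp : 3 * (8 * t ^ 3) + 4 = 24 * t ^ 3 + 4 := by ring
  refine ⟨2 ^ (24 * t ^ 3 + 4), treeWord a b (8 * t ^ 3) 1,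
    treeWord_ne_one (by simp [a, b, Fin.ext_iff]) _ one_ne_zero,
    hexp ▸ norm_treeWord_one_le _, fun H hH hidx => ?_⟩
  refine treeWord_mem_of_index_le a b hH (m := t ^ 4) (s := 2 * t ^ 2) ?_ (by ring_nf; omega) ?_
  · have : (H.index : ℝ) ≤ t ^ 4 := hidx.trans (by exact_mod_cast ht)
    exact_mod_cast this
  · calc (t ^ 4) ^ (2 * t ^ 2) = t ^ (8 * t ^ 2) := by ring
      _ ≤ (2 ^ t) ^ (8 * t ^ 2) := Nat.pow_le_pow_left Nat.lt_two_pow_self.le _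
      _ = 2 ^ (8 * t ^ 3) := by ring
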